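/- arXiv:1104.2762 — 4 statements merged into one kernel-verified Lean document; each statement's English description precedes it below -/
import Mathlib

section
/- With the notation of the junction tree KL formula, KL(P, P_J) = −H(X) + Σ_{C∈𝒞} H(X_C) − Σ_{S∈𝒮} (ν_S − 1) H(X_S); in particular, minimizing KL over junction tree structures is equivalent to minimizing Σ_{C∈𝒞} H(X_C) − Σ_{S∈𝒮} (ν_S − 1) H(X_S). -/
/-! On the support of `p` every marginal is positive, so `log P_J` splits into
`Σ_C log P_C − Σ_S (ν_S − 1) log P_S`; taking the `p`-expectation turns each log-marginal
into minus an entropy. -/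

open scoped Classical BigOperators

namespace TCherryPaper
variable {d : ℕ} {Ω : Type} [Fintype Ω]

/-- Marginal of `p` on coordinates `S`, evaluated at a full configuration `y`. -/
noncomputable def marg (p : (Fin d → Ω) → ℝ) (S : Finset (Fin d)) (y : Fin d → Ω) : ℝ :=
  ∑ x : Fin d → Ω, if ∀ i ∈ S, x i = y i then p x else 0

/-- Shannon entropy of the marginal of `p` on coordinates `S` (as `-E_p[log P(X_S)]`). -/
noncomputable def Hm (p : (Fin d → Ω) → ℝ) (S : Finset (Fin d)) : ℝ :=
  -∑ y : Fin d → Ω, p y * Real.log (marg p S y)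

/-- Information content `I(X_S) = ∑_{i∈S} H(X_i) − H(X_S)`. -/
noncomputable def info (p : (Fin d → Ω) → ℝ) (S : Finset (Fin d)) : ℝ :=
  (∑ i ∈ S, Hm p {i}) - Hm p S

/-- Kullback–Leibler divergence. -/
noncomputable def KL (p q : (Fin d → Ω) → ℝ) : ℝ :=
  ∑ y : Fin d → Ω, p y * Real.log (p y / q y)

def IsProb (p : (Fin d → Ω) → ℝ) : Prop := (∀ y, 0 ≤ p y) ∧ ∑ y, p y = 1

/-- The `j`-th running-intersection separator of an ordered list of clusters. -/
def sep (Cs : List (Finset (Fin d))) (j : ℕ) : Finset (Fin d) :=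
  Cs.getD j ∅ ∩ (Cs.take j).foldr (· ∪ ·) ∅

/-- Running intersection property. -/
def RIP (Cs : List (Finset (Fin d))) : Prop :=
  ∀ j, 1 ≤ j → j < Cs.length → ∃ i < j, sep Cs j ⊆ Cs.getD i ∅

/-- `𝒞` is the cluster set and `𝒮` the separator set of a junction tree. -/
def IsJunctionTree (𝒞 𝒮 : Finset (Finset (Fin d))) : Prop :=
  (∀ C₁ ∈ 𝒞, ∀ C₂ ∈ 𝒞, C₁ ⊆ C₂ → C₁ = C₂) ∧
  ∃ Cs : List (Finset (Fin d)), Cs ≠ [] ∧ Cs.Nodup ∧ Cs.toFinset = 𝒞 ∧ RIP Cs ∧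
    𝒮 = (((List.range Cs.length).filter (fun j => 1 ≤ j)).map (sep Cs)).toFinset

/-- `ν_S`: the number of clusters containing `S`. -/
def nu (𝒞 : Finset (Finset (Fin d))) (S : Finset (Fin d)) : ℕ :=
  (𝒞.filter (fun C => S ⊆ C)).card

/-- The junction tree probability distribution. -/
noncomputable def jtPD (p : (Fin d → Ω) → ℝ) (𝒞 𝒮 : Finset (Finset (Fin d)))
    (y : Fin d → Ω) : ℝ :=
  (∏ C ∈ 𝒞, marg p C y) / ∏ S ∈ 𝒮, (marg p S y) ^ (nu 𝒞 S - 1)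

/-- Conditional independence of `X_A` and `X_B` given `X_C`. -/
def CI (p : (Fin d → Ω) → ℝ) (A B C : Finset (Fin d)) : Prop :=
  ∀ y, marg p (A ∪ B ∪ C) y * marg p C y = marg p (A ∪ C) y * marg p (B ∪ C) y

lemma marg_univ (p : (Fin d → Ω) → ℝ) (y : Fin d → Ω) : marg p Finset.univ y = p y := by
  simp [marg, ← funext_iff]

lemma le_marg {p : (Fin d → Ω) → ℝ} (hp : ∀ x, 0 ≤ p x) (S : Finset (Fin d)) (y : Fin d → Ω) :
    p y ≤ marg p S y := by
  have hy : p y = if ∀ i ∈ S, y i = y i then p y else 0 := by simp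
  rw [hy]
  exact Finset.single_le_sum (f := fun x => if ∀ i ∈ S, x i = y i then p x else 0)
    (fun x _ => by split_ifs <;> simp [hp x]) (Finset.mem_univ y)

lemma one_le_nu_of_mem_separators {𝒞 𝒮 : Finset (Finset (Fin d))} (hJT : IsJunctionTree 𝒞 𝒮)
    {S : Finset (Fin d)} (hS : S ∈ 𝒮) : 1 ≤ nu 𝒞 S := by
  obtain ⟨-, Cs, -, -, rfl, -, rfl⟩ := hJT
  obtain ⟨j, hj, rfl⟩ := List.mem_map.mp (List.mem_toFinset.mp hS)
  have hjlt : j < Cs.length := List.mem_range.mp (List.mem_of_mem_filter hj)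
  have hC : Cs.getD j ∅ ∈ Cs.toFinset := by
    rw [List.mem_toFinset, List.getD_eq_getElem Cs ∅ hjlt]
    exact List.getElem_mem _
  exact Finset.card_pos.mpr ⟨_, Finset.mem_filter.mpr ⟨hC, Finset.inter_subset_left⟩⟩

section
variable {p : (Fin d → Ω) → ℝ} {𝒞 𝒮 : Finset (Finset (Fin d))} {y : Fin d → Ω}

lemma jtPD_ne_zero (hm : ∀ S, marg p S y ≠ 0) : jtPD p 𝒞 𝒮 y ≠ 0 :=
  div_ne_zero (Finset.prod_ne_zero_iff.mpr fun C _ => hm C)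
    (Finset.prod_ne_zero_iff.mpr fun S _ => pow_ne_zero _ (hm S))

/-- The exponent `nu 𝒞 S - 1` in `jtPD` is truncated subtraction in `ℕ`, hence `hν`. -/
lemma log_jtPD (hm : ∀ S, marg p S y ≠ 0) (hν : ∀ S ∈ 𝒮, 1 ≤ nu 𝒞 S) :
    Real.log (jtPD p 𝒞 𝒮 y) =
      ∑ C ∈ 𝒞, Real.log (marg p C y) - ∑ S ∈ 𝒮, ((nu 𝒞 S : ℝ) - 1) * Real.log (marg p S y) := by
  rw [jtPD, Real.log_div (Finset.prod_ne_zero_iff.mpr fun C _ => hm C)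
      (Finset.prod_ne_zero_iff.mpr fun S _ => pow_ne_zero _ (hm S)),
    Real.log_prod fun C _ => hm C, Real.log_prod fun S _ => pow_ne_zero _ (hm S)]
  congr 1
  refine Finset.sum_congr rfl fun S hS => ?_
  rw [Real.log_pow, Nat.cast_sub (hν S hS), Nat.cast_one]

lemma mul_log_div_jtPD (hp : ∀ x, 0 ≤ p x) (hν : ∀ S ∈ 𝒮, 1 ≤ nu 𝒞 S) (y : Fin d → Ω) :
    p y * Real.log (p y / jtPD p 𝒞 𝒮 y) =
      p y * Real.log (p y) - ∑ C ∈ 𝒞, p y * Real.log (marg p C y) +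
        ∑ S ∈ 𝒮, ((nu 𝒞 S : ℝ) - 1) * (p y * Real.log (marg p S y)) := by
  rcases (hp y).eq_or_lt with hy | hy
  · simp [← hy]
  have hm : ∀ S, marg p S y ≠ 0 := fun S => (hy.trans_le (le_marg hp S y)).ne'
  rw [Real.log_div hy.ne' (jtPD_ne_zero hm), log_jtPD hm hν]
  simp only [mul_sub, Finset.mul_sum, mul_left_comm (p y)]
  ring

end

theorem KL_junction_tree_entropy_formula_general
    {d : ℕ} {Ω : Type} [Fintype Ω] (p : (Fin d → Ω) → ℝ) (hp : IsProb p)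
    (𝒞 𝒮 : Finset (Finset (Fin d))) (hJT : IsJunctionTree 𝒞 𝒮) :
    KL p (jtPD p 𝒞 𝒮) =
      -(Hm p Finset.univ) + (∑ C ∈ 𝒞, Hm p C) -
        ∑ S ∈ 𝒮, ((nu 𝒞 S : ℝ) - 1) * Hm p S := by
  have hν : ∀ S ∈ 𝒮, 1 ≤ nu 𝒞 S := fun S hS => one_le_nu_of_mem_separators hJT hS
  simp only [KL, Hm, marg_univ, mul_log_div_jtPD hp.1 hν, Finset.sum_add_distrib,
    Finset.sum_sub_distrib, Finset.mul_sum, Finset.sum_neg_distrib, mul_neg]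
  rw [Finset.sum_comm (s := Finset.univ) (t := 𝒞), Finset.sum_comm (s := Finset.univ) (t := 𝒮)]
  ring

/-- Malvestuto's form of the KL formula:
`KL(P, P_J) = −H(X) + Σ_{C∈𝒞} H(X_C) − Σ_{S∈𝒮} (ν_S − 1) H(X_S)`; since `−H(X)` does not
depend on the junction tree structure, minimizing `KL` over junction tree structures is the
same as minimizing `Σ_{C∈𝒞} H(X_C) − Σ_{S∈𝒮} (ν_S − 1) H(X_S)`. -/
theorem KL_junction_tree_entropy_formula
    {d : ℕ} {Ω : Type} [Fintype Ω] (p : (Fin d → Ω) → ℝ) (hp : IsProb p)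
    (𝒞 𝒮 : Finset (Finset (Fin d))) (hJT : IsJunctionTree 𝒞 𝒮)
    (hcover : 𝒞.sup id = Finset.univ)
    (hpos : ∀ y, 0 < p y → 0 < jtPD p 𝒞 𝒮 y) :
    KL p (jtPD p 𝒞 𝒮) =
      -(Hm p Finset.univ) + (∑ C ∈ 𝒞, Hm p C) -
        ∑ S ∈ 𝒮, ((nu 𝒞 S : ℝ) - 1) * Hm p S :=
  KL_junction_tree_entropy_formula_general p hp 𝒞 𝒮 hJT

end TCherryPaper
end

section
/- Let T be a junction tree distribution and suppose separator S_j separates vertex i_m from subtree T_{m−1} (global Markov property), while S_i does not. Then I(X_{S_j}, X_{i_m}) − I(X_{S_j}) = I(X_{T_{m−1}}, X_{i_m}) − I(X_{T_{m−1}}) and I(X_{S_i}, X_{i_m}) − I(X_{S_i}) ≤ I(X_{T_{m−1}}, X_{i_m}) − I(X_{T_{m−1}}); consequently I(X_{S_i}, X_{i_m}) − I(X_{S_i}) ≤ I(X_{S_j}, X_{i_m}) − I(X_{S_j}). -/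
open scoped Classical BigOperators

namespace TCherryPaper
variable {d : ℕ} {Ω : Type} [Fintype Ω]

/-!
For `S ⊆ T` and `m ∉ T`, the Kullback–Leibler divergence from `p` to the distribution obtained by
replacing the conditional law of `X_m` given `X_T` by that of `X_m` given `X_S` is
`H(X_m | X_S) - H(X_m | X_T)`, and `info p (insert m S) - info p S = H(X_m) - H(X_m | X_S)`.
When `S` separates `m` from `T` the replacement is `p` itself, so the divergence vanishes;
in general the replacement has the same marginal on `T`, hence the same total mass as `p`, and
Gibbs' inequality makes the divergence nonnegative.
-/

section Marginals

variable {p q K : (Fin d → Ω) → ℝ} {S : Finset (Fin d)} {m : Fin d}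

lemma marg_dependsOn (p : (Fin d → Ω) → ℝ) (S : Finset (Fin d)) :
    DependsOn (marg p S) (S : Set (Fin d)) := fun x y hxy => by
  unfold marg
  refine Finset.sum_congr rfl fun u _ => if_congr ?_ rfl rfl
  exact ⟨fun hu i hi => (hu i hi).trans (hxy i hi),
    fun hu i hi => (hu i hi).trans (hxy i hi).symm⟩

lemma marg_pos (hp : ∀ y, 0 < p y) (S : Finset (Fin d)) (y : Fin d → Ω) :
    0 < marg p S y :=
  calc 0 < p y := hp y
    _ = if ∀ i ∈ S, y i = y i then p y else 0 := by simp
    _ ≤ marg p S y :=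
      Finset.single_le_sum (f := fun x => if ∀ i ∈ S, x i = y i then p x else 0)
        (fun x _ => by split <;> simp [(hp x).le]) (Finset.mem_univ y)

lemma marg_mul_of_dependsOn (hK : DependsOn K (S : Set (Fin d))) (y : Fin d → Ω) :
    marg (fun x => p x * K x) S y = marg p S y * K y := by
  unfold marg
  rw [Finset.sum_mul]
  refine Finset.sum_congr rfl fun x _ => ?_
  dsimp only
  split_ifs with hx
  · rw [hK hx]
  · rw [zero_mul]

lemma sum_marg_insert_update (f : (Fin d → Ω) → ℝ) (hm : m ∉ S) (y : Fin d → Ω) :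
    ∑ a : Ω, marg f (insert m S) (Function.update y m a) = marg f S y := by
  unfold marg
  rw [Finset.sum_comm]
  refine Finset.sum_congr rfl fun x _ => ?_
  have hagree : ∀ a : Ω, (∀ i ∈ insert m S, x i = Function.update y m a i) ↔
      (a = x m ∧ ∀ i ∈ S, x i = y i) := fun a => by
    have hupd : ∀ i ∈ S, Function.update y m a i = y i :=
      fun i hi => Function.update_of_ne (ne_of_mem_of_not_mem hi hm) a y
    rw [Finset.forall_mem_insert, Function.update_self, eq_comm (a := x m)]
    exact and_congr_right fun _ => forall₂_congr fun i hi => by rw [hupd i hi]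
  simp_rw [hagree, ite_and, Finset.sum_ite_eq', Finset.mem_univ, if_true]

/-- Both sides equal `∑ x y, p y * q x * F y` over pairs `x, y` agreeing on `S`. -/
lemma sum_mul_mul_marg_comm {F : (Fin d → Ω) → ℝ} (hF : DependsOn F (S : Set (Fin d))) :
    ∑ y, p y * F y * marg q S y = ∑ y, q y * F y * marg p S y := by
  unfold marg
  simp_rw [Finset.mul_sum, mul_ite, mul_zero]
  rw [Finset.sum_comm]
  refine Finset.sum_congr rfl fun x _ => Finset.sum_congr rfl fun y _ => ?_
  by_cases hxy : ∀ i ∈ S, x i = y i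
  · rw [if_pos hxy, if_pos fun i hi => (hxy i hi).symm, hF hxy]
    ring
  · rw [if_neg hxy, if_neg fun h => hxy fun i hi => (h i hi).symm]

lemma sum_eq_of_marg_eq (hpos : ∀ y, 0 < marg p S y) (h : marg q S = marg p S) :
    ∑ y, q y = ∑ y, p y := by
  have hF : DependsOn (fun y => (marg p S y)⁻¹) (S : Set (Fin d)) :=
    fun x y hxy => by simp only [marg_dependsOn p S hxy]
  have := sum_mul_mul_marg_comm (p := q) (q := p) hF
  simp_rw [h, mul_assoc, inv_mul_cancel₀ (hpos _).ne', mul_one] at this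
  exact this

end Marginals

lemma KL_self (p : (Fin d → Ω) → ℝ) : KL p p = 0 :=
  Finset.sum_eq_zero fun y _ => by
    by_cases hy : p y = 0 <;> simp [hy]

lemma KL_nonneg {p q : (Fin d → Ω) → ℝ} (hp : ∀ y, 0 < p y) (hq : ∀ y, 0 < q y)
    (hsum : ∑ y, q y = ∑ y, p y) : 0 ≤ KL p q := by
  have hterm : ∀ y, p y - q y ≤ p y * Real.log (p y / q y) := fun y => by
    have h := mul_le_mul_of_nonneg_left
      (Real.one_sub_inv_le_log_of_pos (div_pos (hp y) (hq y))) (hp y).le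
    rwa [inv_div, mul_sub, mul_one, mul_div_cancel₀ _ (hp y).ne'] at h
  calc (0 : ℝ) = ∑ y, (p y - q y) := by rw [Finset.sum_sub_distrib, hsum, sub_self]
    _ ≤ KL p q := Finset.sum_le_sum fun y _ => hterm y

/-- The distribution `P(X_T) P(X_S, X_m) / P(X_S)` on the coordinates `insert m T`, extended to
all coordinates by the conditional law of `p` given `X_{insert m T}`. -/
noncomputable def condReplace (p : (Fin d → Ω) → ℝ) (T S : Finset (Fin d)) (m : Fin d)
    (y : Fin d → Ω) : ℝ :=
  p y * (marg p T y * marg p (insert m S) y / marg p S y / marg p (insert m T) y)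

section CondReplace

variable {p : (Fin d → Ω) → ℝ} {T S : Finset (Fin d)} {m : Fin d}

lemma condReplace_pos (hp : ∀ y, 0 < p y) (y : Fin d → Ω) : 0 < condReplace p T S m y := by
  have hmarg := marg_pos hp
  exact mul_pos (hp y) <|
    div_pos (div_pos (mul_pos (hmarg T y) (hmarg _ y)) (hmarg S y)) (hmarg _ y)

lemma condReplace_eq_self
    (hsep : ∀ y, marg p (insert m T) y = marg p T y * marg p (insert m S) y / marg p S y)
    (hp : ∀ y, 0 < p y) : condReplace p T S m = p := funext fun y => by
  rw [condReplace, ← hsep, div_self (marg_pos hp _ y).ne', mul_one]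

lemma marg_condReplace (hp : ∀ y, 0 < p y) (hm : m ∉ T) (hS : S ⊆ T) :
    marg (condReplace p T S m) T = marg p T := funext fun y => by
  have hK : DependsOn (fun x => marg p T x * marg p (insert m S) x / marg p S x
      / marg p (insert m T) x) (insert m T : Finset (Fin d)) := fun x z hxz => by
    simp only [marg_dependsOn p T fun i hi => hxz i (Finset.mem_insert_of_mem hi),
      marg_dependsOn p (insert m S) fun i hi => hxz i (Finset.insert_subset_insert m hS hi),
      marg_dependsOn p S fun i hi => hxz i (Finset.mem_insert_of_mem (hS hi)),
      marg_dependsOn p (insert m T) hxz]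
  have hupdate : ∀ (A : Finset (Fin d)), m ∉ A → ∀ a : Ω,
      marg p A (Function.update y m a) = marg p A y := fun A hA a =>
    marg_dependsOn p A fun i hi => Function.update_of_ne (ne_of_mem_of_not_mem hi hA) a y
  calc marg (condReplace p T S m) T y
      = ∑ a : Ω, marg p T y * marg p (insert m S) (Function.update y m a) / marg p S y := by
        rw [← sum_marg_insert_update _ hm]
        refine Finset.sum_congr rfl fun a _ => ?_
        unfold condReplace
        rw [marg_mul_of_dependsOn hK,
          mul_div_cancel₀ _ (marg_pos hp _ _).ne', hupdate T hm, hupdate S (fun h => hm (hS h))]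
    _ = marg p T y := by
        rw [← Finset.sum_div, ← Finset.mul_sum, sum_marg_insert_update _ (fun h => hm (hS h)),
          mul_div_cancel_right₀ _ (marg_pos hp _ _).ne']

lemma sum_condReplace (hp : ∀ y, 0 < p y) (hm : m ∉ T) (hS : S ⊆ T) :
    ∑ y, condReplace p T S m y = ∑ y, p y :=
  sum_eq_of_marg_eq (marg_pos hp T) (marg_condReplace hp hm hS)

lemma KL_condReplace (hp : ∀ y, 0 < p y) :
    KL p (condReplace p T S m)
      = Hm p T + Hm p (insert m S) - Hm p S - Hm p (insert m T) := by
  have hlog : ∀ y, Real.log (p y / condReplace p T S m y)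
      = Real.log (marg p S y) + Real.log (marg p (insert m T) y)
        - Real.log (marg p T y) - Real.log (marg p (insert m S) y) := fun y => by
    have h := fun A => (marg_pos hp A y).ne'
    rw [condReplace, div_mul_cancel_left₀ (hp y).ne', inv_div, div_div_eq_mul_div,
      Real.log_div (mul_ne_zero (h _) (h _)) (mul_ne_zero (h _) (h _)), Real.log_mul (h _) (h _),
      Real.log_mul (h _) (h _)]
    ring
  simp only [KL, Hm, hlog, mul_sub, mul_add, Finset.sum_sub_distrib, Finset.sum_add_distrib]
  ring

end CondReplace

lemma info_insert_sub_info (p : (Fin d → Ω) → ℝ) {S : Finset (Fin d)} {m : Fin d}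
    (hm : m ∉ S) : info p (insert m S) - info p S = Hm p {m} + Hm p S - Hm p (insert m S) := by
  rw [info, info, Finset.sum_insert hm]
  ring

theorem separator_info_gain_general
    {d : ℕ} {Ω : Type} [Fintype Ω] (p : (Fin d → Ω) → ℝ)
    (hppos : ∀ y, 0 < p y)
    (T Sj Si : Finset (Fin d)) (m : Fin d) (hm : m ∉ T)
    (hSj : Sj ⊆ T) (hSi : Si ⊆ T)
    (hsep : ∀ y, marg p (insert m T) y = marg p T y * marg p (insert m Sj) y / marg p Sj y) :
    info p (insert m Sj) - info p Sj = info p (insert m T) - info p T ∧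
    info p (insert m Si) - info p Si ≤ info p (insert m T) - info p T ∧
    info p (insert m Si) - info p Si ≤ info p (insert m Sj) - info p Sj := by
  have hexact : Hm p T + Hm p (insert m Sj) - Hm p Sj - Hm p (insert m T) = 0 := by
    rw [← KL_condReplace hppos, condReplace_eq_self hsep hppos, KL_self]
  have happrox : 0 ≤ Hm p T + Hm p (insert m Si) - Hm p Si - Hm p (insert m T) := by
    rw [← KL_condReplace hppos]
    exact KL_nonneg hppos (condReplace_pos hppos) (sum_condReplace hppos hm hSi)
  rw [info_insert_sub_info p hm, info_insert_sub_info p fun h => hm (hSj h),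
    info_insert_sub_info p fun h => hm (hSi h)]
  exact ⟨by linarith, by linarith, by linarith⟩

/-- if the separator `S_j ⊆ T` separates the vertex `m ∉ T` from `T`
(global Markov property: `P(X_T, X_m) = P(X_T) P(X_{S_j}, X_m) / P(X_{S_j})`), while
`S_i ⊆ T` does not, then
`I(X_{S_j}, X_m) − I(X_{S_j}) = I(X_T, X_m) − I(X_T)`,
`I(X_{S_i}, X_m) − I(X_{S_i}) ≤ I(X_T, X_m) − I(X_T)`, and consequently
`I(X_{S_i}, X_m) − I(X_{S_i}) ≤ I(X_{S_j}, X_m) − I(X_{S_j})`. -/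
theorem separator_info_gain
    {d : ℕ} {Ω : Type} [Fintype Ω] (p : (Fin d → Ω) → ℝ)
    (hp : IsProb p) (hppos : ∀ y, 0 < p y)
    (T Sj Si : Finset (Fin d)) (m : Fin d) (hm : m ∉ T)
    (hSj : Sj ⊆ T) (hSi : Si ⊆ T)
    (hsep : ∀ y, marg p (insert m T) y = marg p T y * marg p (insert m Sj) y / marg p Sj y)
    (hnotsep : ¬ ∀ y,
      marg p (insert m T) y = marg p T y * marg p (insert m Si) y / marg p Si y) :
    info p (insert m Sj) - info p Sj = info p (insert m T) - info p T ∧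
    info p (insert m Si) - info p Si ≤ info p (insert m T) - info p T ∧
    info p (insert m Si) - info p Si ≤ info p (insert m Sj) - info p Sj :=
  separator_info_gain_general p hppos T Sj Si m hm hSj hSi hsep

end TCherryPaper
end

section
/- A connected acyclic hypergraph whose hyperedges each have size k and whose running-intersection separators each have size k−1 corresponds to a k-th order t-cherry tree: the union of the complete graphs on its hyperedges is a k-th order t-cherry tree. -/
open scoped Classical BigOperators

namespace TCherryPaper
variable {d : ℕ} {Ω : Type} [Fintype Ω]

/-- `G` is a `k`-th order t-cherry tree on `Fin d`: there is a building order in which the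
first `k-1` vertices form a complete graph and each later vertex is joined to exactly the
vertices of a `(k-1)`-clique among the earlier vertices. -/
def IsTCherry (k d : ℕ) (G : SimpleGraph (Fin d)) : Prop :=
  ∃ σ : Equiv.Perm (Fin d),
    (∀ i j : Fin d, i.val < k - 1 → j.val < k - 1 → i ≠ j → G.Adj (σ i) (σ j)) ∧
    (∀ j : Fin d, k - 1 ≤ j.val → ∃ N : Finset (Fin d),
      N.card = k - 1 ∧
      (∀ a ∈ N, ∃ i : Fin d, i.val < j.val ∧ σ i = a) ∧
      (∀ a ∈ N, ∀ b ∈ N, a ≠ b → G.Adj a b) ∧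
      (∀ i : Fin d, i.val < j.val → (G.Adj (σ j) (σ i) ↔ σ i ∈ N)) ∧
      (∀ a : Fin d, G.Adj (σ j) a → a ∈ N ∨ ∃ i : Fin d, j.val < i.val ∧ σ i = a))

/-- Chordality: every cycle of length greater than 3 has a chord. -/
def IsChordal {V : Type*} (G : SimpleGraph V) : Prop :=
  ∀ (u : V) (c : G.Walk u u), c.IsCycle → 3 < c.length →
    ∃ v w, v ∈ c.support ∧ w ∈ c.support ∧ G.Adj v w ∧ s(v, w) ∉ c.edges

/-- A maximal clique (as a finset of vertices). -/
def MaxClique {V : Type*} (G : SimpleGraph V) (s : Finset V) : Prop :=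
  G.IsClique ↑s ∧ ∀ t : Finset V, G.IsClique ↑t → s ⊆ t → s = t

/-- `C` separates `A` and `B` in `G`: every walk from `A` to `B` meets `C`. -/
def Separates {V : Type*} (G : SimpleGraph V) (A B C : Finset V) : Prop :=
  ∀ a ∈ A, ∀ b ∈ B, ∀ w : G.Walk a b, ∃ v ∈ w.support, v ∈ C


lemma mem_foldr_union {α : Type*} [DecidableEq α] (L : List (Finset α)) (v : α) :
    v ∈ L.foldr (· ∪ ·) ∅ ↔ ∃ m, m < L.length ∧ v ∈ L.getD m ∅ := by
  induction L with
  | nil => simp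
  | cons C L ih =>
    simp only [List.foldr_cons, Finset.mem_union, ih, List.length_cons]
    constructor
    · rintro (h | ⟨m, hm, h⟩)
      · exact ⟨0, by omega, h⟩
      · exact ⟨m + 1, by omega, h⟩
    · rintro ⟨m, hm, h⟩
      match m with
      | 0 => exact Or.inl h
      | m + 1 => exact Or.inr ⟨m, by omega, h⟩

/-- a connected acyclic hypergraph `C₁,…,C_n` (no hyperedge contained in
another, running intersection property) covering the vertex set, whose hyperedges all have
size `k` and whose running-intersection separators all have size `k−1`, corresponds to a
`k`-th order t-cherry tree: the union of the complete graphs on its hyperedges is a `k`-th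
order t-cherry tree. -/
theorem acyclic_hypergraph_is_tCherry
    (k d : ℕ) (hk : 1 ≤ k)
    (Cs : List (Finset (Fin d))) (hne : Cs ≠ []) (hnodup : Cs.Nodup)
    (hmax : ∀ C₁ ∈ Cs, ∀ C₂ ∈ Cs, C₁ ⊆ C₂ → C₁ = C₂)
    (hRIP : RIP Cs)
    (hcard : ∀ C ∈ Cs, C.card = k)
    (hsepcard : ∀ j, 1 ≤ j → j < Cs.length → (sep Cs j).card = k - 1)
    (hcover : ∀ v : Fin d, ∃ C ∈ Cs, v ∈ C) :
    IsTCherry k d (SimpleGraph.fromRel (fun a b => ∃ C ∈ Cs, a ∈ C ∧ b ∈ C)) := by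
  set n := Cs.length with hn
  have hn1 : 1 ≤ n := by
    rcases Cs with _ | ⟨C, Cs⟩
    · exact absurd rfl hne
    · simp [hn]
  set U : ℕ → Finset (Fin d) := fun j => (Cs.take j).foldr (· ∪ ·) ∅ with hU
  have hmemU : ∀ j v, v ∈ U j ↔ ∃ m, m < j ∧ m < n ∧ v ∈ Cs.getD m ∅ := by
    intro j v
    rw [hU]
    simp only [mem_foldr_union, List.length_take]
    constructor
    · rintro ⟨m, hm, h⟩
      have hm1 : m < j := by omega
      have hm2 : m < n := by omega
      refine ⟨m, hm1, hm2, ?_⟩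
      rwa [List.getD_eq_getElem _ _ (by simpa using hm), List.getElem_take,
        ← List.getD_eq_getElem _ _ hm2] at h
    · rintro ⟨m, hm1, hm2, h⟩
      refine ⟨m, by omega, ?_⟩
      rwa [List.getD_eq_getElem _ _ (by simp; omega), List.getElem_take,
        ← List.getD_eq_getElem _ _ hm2]
  have hUmono : ∀ {j j'}, j ≤ j' → U j ⊆ U j' := by
    intro j j' hjj v hv
    rw [hmemU] at hv ⊢
    obtain ⟨m, h1, h2, h3⟩ := hv
    exact ⟨m, by omega, h2, h3⟩
  have hCmem : ∀ m, m < n → Cs.getD m ∅ ∈ Cs := by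
    intro m hm
    rw [List.getD_eq_getElem _ _ hm]
    exact List.getElem_mem _
  have hC0 : Cs.getD 0 ∅ ∈ Cs := hCmem 0 hn1
  have hC0card : (Cs.getD 0 ∅).card = k := hcard _ hC0
  have hsd1 : ∀ j, 1 ≤ j → j < n → (Cs.getD j ∅ \ U j).card = 1 := by
    intro j h1 h2
    have h3 := hsepcard j h1 h2
    have h4 : sep Cs j = Cs.getD j ∅ ∩ U j := rfl
    have h5 := Finset.card_inter_add_card_sdiff (Cs.getD j ∅) (U j)
    rw [← h4, h3, hcard _ (hCmem j h2)] at h5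
    omega
  have hUsucc : ∀ j, j < n → U (j + 1) = U j ∪ Cs.getD j ∅ := by
    intro j hj
    ext v
    simp only [hmemU, Finset.mem_union]
    constructor
    · rintro ⟨m, h1, h2, h3⟩
      rcases Nat.lt_or_ge m j with h | h
      · exact Or.inl ⟨m, h, h2, h3⟩
      · have : m = j := by omega
        exact Or.inr (this ▸ h3)
    · rintro (⟨m, h1, h2, h3⟩ | h)
      · exact ⟨m, by omega, h2, h3⟩
      · exact ⟨j, by omega, hj, h⟩
  have hUcard : ∀ j, 1 ≤ j → j ≤ n → (U j).card = k + j - 1 := by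
    intro j
    induction j with
    | zero => omega
    | succ j ih =>
      intro _ hjn
      rcases Nat.eq_zero_or_pos j with h0 | h0
      · subst h0
        rw [hUsucc 0 (by omega)]
        have : U 0 = ∅ := by rw [hU]; simp
        rw [this, Finset.empty_union, hC0card]
        omega
      · have hj : j < n := by omega
        have h1 := ih h0 (by omega)
        have h2 := Finset.card_union_add_card_inter (U j) (Cs.getD j ∅)
        have h3 : (U j ∩ Cs.getD j ∅).card = k - 1 := by
          rw [Finset.inter_comm]
          exact hsepcard j h0 hj
        rw [hUsucc j hj]
        have h4 := hcard _ (hCmem j hj)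
        omega
  have hUuniv : U n = Finset.univ := by
    ext v
    simp only [Finset.mem_univ, iff_true]
    obtain ⟨C, hC, hv⟩ := hcover v
    obtain ⟨m, hm, hCm⟩ := List.mem_iff_getElem.mp hC
    rw [hmemU]
    exact ⟨m, hm, hm, by rw [List.getD_eq_getElem _ _ hm, hCm]; exact hv⟩
  have hd : d = k + n - 1 := by
    have h1 := hUcard n hn1 le_rfl
    rw [hUuniv] at h1
    have h2 : (Finset.univ : Finset (Fin d)).card = d := by simp
    omega
  -- the key structural lemma
  have key : ∀ m', m' < n → ∀ j, 1 ≤ j → j < n → ∀ v u : Fin d,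
      v ∈ Cs.getD j ∅ → v ∉ U j → u ∈ U j →
      v ∈ Cs.getD m' ∅ → u ∈ Cs.getD m' ∅ → u ∈ Cs.getD j ∅ := by
    intro m'
    induction m' using Nat.strong_induction_on with
    | _ m' ih =>
      intro hm' j hj1 hjn v u hvC hvU huU hvm hum
      rcases lt_trichotomy m' j with h | h | h
      · exact absurd ((hmemU j v).mpr ⟨m', h, hm', hvm⟩) hvU
      · exact h ▸ hum
      · obtain ⟨i, hi, hsub⟩ := hRIP m' (by omega) hm'
        have hvS : v ∈ sep Cs m' := Finset.mem_inter.mpr ⟨hvm, (hmemU m' v).mpr ⟨j, h, hjn, hvC⟩⟩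
        have huS : u ∈ sep Cs m' := Finset.mem_inter.mpr ⟨hum, hUmono (by omega : j ≤ m') huU⟩
        exact ih i hi (by omega) j hj1 hjn v u hvC hvU huU (hsub hvS) (hsub huS)
  -- the enumeration
  have hne1 : ∀ p : Fin d, k ≤ p.val →
      (Cs.getD (p.val - k + 1) ∅ \ U (p.val - k + 1)).Nonempty := by
    intro p hp
    apply Finset.card_pos.mp
    rw [hsd1 (p.val - k + 1) (by omega) (by have := p.isLt; omega)]
    omega
  set f : Fin d → Fin d := fun p =>
    if h : p.val < k then ((Cs.getD 0 ∅).orderIsoOfFin hC0card ⟨p.val, h⟩ : Fin d)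
    else (hne1 p (by omega)).choose with hf
  have hf1 : ∀ p : Fin d, (h : p.val < k) →
      f p = ((Cs.getD 0 ∅).orderIsoOfFin hC0card ⟨p.val, h⟩ : Fin d) := by
    intro p h; rw [hf]; simp only [dif_pos h]
  have hf1' : ∀ p : Fin d, p.val < k → f p ∈ Cs.getD 0 ∅ := by
    intro p h
    rw [hf1 p h]
    exact ((Cs.getD 0 ∅).orderIsoOfFin hC0card ⟨p.val, h⟩).2
  have hf2 : ∀ p : Fin d, k ≤ p.val →
      f p ∈ Cs.getD (p.val - k + 1) ∅ \ U (p.val - k + 1) := by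
    intro p h
    rw [hf]
    simp only [dif_neg (by omega : ¬ p.val < k)]
    exact (hne1 p (by omega)).choose_spec
  have hjrange : ∀ p : Fin d, k ≤ p.val → 1 ≤ p.val - k + 1 ∧ p.val - k + 1 < n := by
    intro p h
    have := p.isLt
    omega
  have hUof : ∀ p : Fin d, ∀ j, 1 ≤ j → p.val < k + j - 1 → f p ∈ U j := by
    intro p j hj1 hpj
    rcases Nat.lt_or_ge p.val k with h | h
    · exact (hmemU j (f p)).mpr ⟨0, by omega, by omega, hf1' p h⟩
    · have h2 := hf2 p h
      rw [Finset.mem_sdiff] at h2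
      exact (hmemU j (f p)).mpr ⟨p.val - k + 1, by omega, (hjrange p h).2, h2.1⟩
  have hinj : Function.Injective f := by
    intro p q hpq
    by_contra hne'
    -- wlog p.val < q.val
    have main : ∀ p q : Fin d, p.val < q.val → f p ≠ f q := by
      intro p q hlt
      have hq : k ≤ q.val ∨ q.val < k := by omega
      rcases Nat.lt_or_ge q.val k with h | h
      · -- both < k : orderIso injective
        intro heq
        rw [hf1 p (by omega), hf1 q h] at heq
        have := Subtype.coe_injective heq
        have := (Cs.getD 0 ∅).orderIsoOfFin hC0card |>.injective this
        simp only [Fin.mk.injEq] at this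
        omega
      · intro heq
        have h2 := hf2 q h
        rw [Finset.mem_sdiff] at h2
        have : f p ∈ U (q.val - k + 1) := hUof p _ (hjrange q h).1 (by omega)
        rw [heq] at this
        exact h2.2 this
    rcases lt_trichotomy p.val q.val with h | h | h
    · exact main p q h hpq
    · exact hne' (Fin.ext h)
    · exact main q p h hpq.symm
  have hbij : Function.Bijective f := Finite.injective_iff_bijective.mp hinj
  set σ : Equiv.Perm (Fin d) := Equiv.ofBijective f hbij with hσ
  have hσa : ∀ p, σ p = f p := fun p => rfl
  set G := SimpleGraph.fromRel (fun a b : Fin d => ∃ C ∈ Cs, a ∈ C ∧ b ∈ C) with hG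
  have hadj : ∀ a b : Fin d, G.Adj a b ↔ a ≠ b ∧ ∃ C ∈ Cs, a ∈ C ∧ b ∈ C := by
    intro a b
    rw [hG, SimpleGraph.fromRel_adj]
    constructor
    · rintro ⟨h1, (⟨C, h2, h3, h4⟩ | ⟨C, h2, h3, h4⟩)⟩
      exacts [⟨h1, C, h2, h3, h4⟩, ⟨h1, C, h2, h4, h3⟩]
    · rintro ⟨h1, C, h2, h3, h4⟩
      exact ⟨h1, Or.inl ⟨C, h2, h3, h4⟩⟩
  refine ⟨σ, ?_, ?_⟩
  · intro i j hi hj hij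
    rw [hσa, hσa, hadj]
    exact ⟨fun h => hij (hinj h), Cs.getD 0 ∅, hC0,
      hf1' i (by omega), hf1' j (by omega)⟩
  · intro q hq
    rcases Nat.lt_or_ge q.val k with hqk | hqk
    · -- q.val = k - 1 : last vertex of the first cluster
      have hfqC : f q ∈ Cs.getD 0 ∅ := hf1' q hqk
      refine ⟨(Cs.getD 0 ∅).erase (f q), ?_, ?_, ?_, ?_, ?_⟩
      · rw [Finset.card_erase_of_mem hfqC, hC0card]
      · intro a ha
        rw [Finset.mem_erase] at ha
        obtain ⟨i, rfl⟩ := σ.surjective a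
        rw [hσa] at ha ⊢
        refine ⟨i, ?_, rfl⟩
        have hik : i.val < k := by
          by_contra h
          have h2 := hf2 i (by omega)
          rw [Finset.mem_sdiff] at h2
          exact h2.2 ((hmemU _ (f i)).mpr ⟨0, by omega, by omega,
            ha.2⟩)
        have : i.val ≠ q.val := fun h => ha.1 (congrArg f (Fin.ext h))
        omega
      · intro a ha b hb hab
        rw [Finset.mem_erase] at ha hb
        rw [hadj]
        exact ⟨hab, Cs.getD 0 ∅, hC0, ha.2, hb.2⟩
      · intro i hi
        rw [hσa, hσa, hadj]
        have hik : i.val < k := by omega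
        have hiq : f i ≠ f q := fun h => by have := hinj h; omega
        constructor
        · intro _
          exact Finset.mem_erase.mpr ⟨hiq, hf1' i hik⟩
        · intro _
          exact ⟨fun h => hiq h.symm, Cs.getD 0 ∅, hC0, hfqC, hf1' i hik⟩
      · intro a ha
        obtain ⟨i, rfl⟩ := σ.surjective a
        rcases lt_trichotomy i.val q.val with h | h | h
        · left
          rw [hσa]
          refine Finset.mem_erase.mpr ⟨fun heq => ?_, hf1' i (by omega)⟩
          have := hinj heq; omega
        · exact absurd (Fin.ext h : i = q) (by rintro rfl; exact (hadj _ _).mp ha |>.1 rfl)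
        · exact Or.inr ⟨i, h, rfl⟩
    · -- q.val ≥ k : new vertex of cluster j = q.val - k + 1
      set j := q.val - k + 1 with hjdef
      obtain ⟨hj1, hjn⟩ := hjrange q hqk
      have hfq := hf2 q hqk
      rw [Finset.mem_sdiff] at hfq
      obtain ⟨hfqC, hfqU⟩ := hfq
      have hearly : ∀ i : Fin d, i.val < q.val → f i ∈ U j :=
        fun i hi => hUof i j hj1 (by omega)
      have hlate : ∀ i : Fin d, q.val ≤ i.val → f i ∉ U j := by
        intro i hi hmem
        have h2 := hf2 i (by omega)
        rw [Finset.mem_sdiff] at h2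
        exact h2.2 (hUmono (by omega : j ≤ i.val - k + 1) hmem)
      have hc4 : ∀ i : Fin d, i.val < q.val → (G.Adj (σ q) (σ i) ↔ σ i ∈ sep Cs j) := by
        intro i hi
        rw [hσa, hσa]
        constructor
        · intro h
          obtain ⟨hne2, C, hC, h1, h2⟩ := (hadj _ _).mp h
          obtain ⟨m', hm', hCm'⟩ := List.mem_iff_getElem.mp hC
          have hCget : C = Cs.getD m' ∅ := by rw [List.getD_eq_getElem _ _ hm', hCm']
          subst hCget
          exact Finset.mem_inter.mpr
            ⟨key m' hm' j hj1 hjn (f q) (f i) hfqC hfqU (hearly i hi) h1 h2, hearly i hi⟩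
        · intro h
          obtain ⟨h1, h2⟩ := Finset.mem_inter.mp h
          rw [hadj]
          exact ⟨fun heq => hfqU (heq ▸ h2), Cs.getD j ∅, hCmem j hjn, hfqC, h1⟩
      refine ⟨sep Cs j, hsepcard j hj1 hjn, ?_, ?_, hc4, ?_⟩
      · intro a ha
        obtain ⟨h1, h2⟩ := Finset.mem_inter.mp ha
        obtain ⟨i, rfl⟩ := σ.surjective a
        rw [hσa] at h2 ⊢
        refine ⟨i, ?_, rfl⟩
        by_contra h
        exact hlate i (by omega) h2
      · intro a ha b hb hab
        obtain ⟨ha1, _⟩ := Finset.mem_inter.mp ha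
        obtain ⟨hb1, _⟩ := Finset.mem_inter.mp hb
        rw [hadj]
        exact ⟨hab, Cs.getD j ∅, hCmem j hjn, ha1, hb1⟩
      · intro a ha
        obtain ⟨i, rfl⟩ := σ.surjective a
        rcases lt_trichotomy i.val q.val with h | h | h
        · exact Or.inl ((hc4 i h).mp ha)
        · exact absurd (Fin.ext h : i = q) (by rintro rfl; exact (hadj _ _).mp ha |>.1 rfl)
        · exact Or.inr ⟨i, h, rfl⟩

end TCherryPaper
end

section
/- Graham reduction succeeds on a hypergraph given by the maximal cliques of a k-th order t-cherry tree: repeatedly deleting a vertex that appears in only one hyperedge, and deleting any hyperedge contained in another, reduces the hypergraph to nothing. -/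
open scoped Classical

namespace TCherryPaper

/-- Graham reduction: a hypergraph reduces to nothing if, by repeatedly deleting a vertex
that occurs in exactly one hyperedge (from the vertex set and from that edge) and deleting
a hyperedge that is contained in another one, it can be reduced to the empty hypergraph. -/
inductive GrahamReducible {d : ℕ} : Finset (Finset (Fin d)) → Prop
  | nil : GrahamReducible ∅
  | singleEmpty : GrahamReducible {∅}
  | nodeRemoval (H : Finset (Finset (Fin d))) (E : Finset (Fin d)) (hE : E ∈ H)
      (v : Fin d) (hv : v ∈ E) (huniq : ∀ E' ∈ H, v ∈ E' → E' = E)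
      (h : GrahamReducible (insert (E.erase v) (H.erase E))) : GrahamReducible H
  | edgeRemoval (H : Finset (Finset (Fin d))) (E E' : Finset (Fin d))
      (hE : E ∈ H) (hE' : E' ∈ H) (hne : E ≠ E') (hsub : E ⊆ E')
      (h : GrahamReducible (H.erase E)) : GrahamReducible H

lemma graham_single {d : ℕ} (E : Finset (Fin d)) : GrahamReducible {E} := by
  induction E using Finset.strongInduction with
  | _ E ih =>
    rcases E.eq_empty_or_nonempty with rfl | ⟨v, hv⟩
    · exact GrahamReducible.singleEmpty
    · refine GrahamReducible.nodeRemoval {E} E (by simp) v hv (by simp) ?_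
      have h1 : ({E} : Finset (Finset (Fin d))).erase E = ∅ := by simp
      rw [h1]
      have h2 : insert (E.erase v) (∅ : Finset (Finset (Fin d))) = {E.erase v} := rfl
      rw [h2]
      exact ih (E.erase v) (Finset.erase_ssubset hv)

lemma master (k d : ℕ) (hk : 1 ≤ k) (hkd : k - 1 ≤ d)
    (G : SimpleGraph (Fin d)) (σ : Equiv.Perm (Fin d))
    (hbase : ∀ a b : Fin d, (σ.symm a).val < k-1 → (σ.symm b).val < k-1 → a ≠ b → G.Adj a b)
    (N : ℕ → Finset (Fin d))
    (hcard : ∀ j, k-1 ≤ j → j < d → (N j).card = k-1)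
    (hidx : ∀ j, k-1 ≤ j → j < d → ∀ a ∈ N j, (σ.symm a).val < j)
    (hclq : ∀ j, k-1 ≤ j → j < d → ∀ a ∈ N j, ∀ b ∈ N j, a ≠ b → G.Adj a b)
    (hadj : ∀ j, k-1 ≤ j → ∀ (hj2 : j < d), ∀ a : Fin d, (σ.symm a).val < j →
      (G.Adj (σ ⟨j, hj2⟩) a ↔ a ∈ N j))
    (hnb : ∀ j, k-1 ≤ j → ∀ (hj2 : j < d), ∀ a, G.Adj (σ ⟨j, hj2⟩) a →
      a ∈ N j ∨ j < (σ.symm a).val) :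
    GrahamReducible (Finset.univ.powerset.filter (fun s => MaxClique G s)) := by
  classical
  -- base clique
  set B : Finset (Fin d) :=
    ((Finset.range (k-1)).attachFin
      (fun m hm => lt_of_lt_of_le (Finset.mem_range.mp hm) hkd)).image σ with hBdef
  have memB : ∀ a : Fin d, a ∈ B ↔ (σ.symm a).val < k-1 := by
    intro a
    rw [hBdef]
    simp only [Finset.mem_image, Finset.mem_attachFin, Finset.mem_range]
    constructor
    · rintro ⟨i, hi, rfl⟩; simpa using hi
    · intro h; exact ⟨σ.symm a, h, by simp⟩
  have cardB : B.card = k - 1 := by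
    rw [hBdef, Finset.card_image_of_injective _ σ.injective, Finset.card_attachFin,
      Finset.card_range]
  have cliqueB : G.IsClique ↑B := by
    intro a ha b hb hab
    simp only [Finset.coe_mem, Finset.mem_coe] at ha hb
    exact hbase a b ((memB a).mp ha) ((memB b).mp hb) hab
  -- extension cliques
  set Cn : ℕ → Finset (Fin d) :=
    fun j => if h : j < d then insert (σ ⟨j, h⟩) (N j) else ∅ with hCndef
  have vnotinN : ∀ j (h1 : k-1 ≤ j) (h2 : j < d), σ ⟨j, h2⟩ ∉ N j := by
    intro j h1 h2 hmem
    have := hidx j h1 h2 _ hmem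
    simp at this
  have Cval : ∀ j (h2 : j < d), Cn j = insert (σ ⟨j, h2⟩) (N j) := by
    intro j h2; rw [hCndef]; simp [h2]
  have memC : ∀ j (h1 : k-1 ≤ j) (h2 : j < d) (a : Fin d),
      a ∈ Cn j ↔ a = σ ⟨j, h2⟩ ∨ a ∈ N j := by
    intro j h1 h2 a; rw [Cval j h2]; simp
  have vinC : ∀ j (h1 : k-1 ≤ j) (h2 : j < d), σ ⟨j, h2⟩ ∈ Cn j := by
    intro j h1 h2; rw [memC j h1 h2]; left; rfl
  have idxC : ∀ j (h1 : k-1 ≤ j) (h2 : j < d), ∀ a ∈ Cn j, (σ.symm a).val ≤ j := by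
    intro j h1 h2 a ha
    rcases (memC j h1 h2 a).mp ha with rfl | ha
    · simp
    · exact le_of_lt (hidx j h1 h2 a ha)
  have cardC : ∀ j (h1 : k-1 ≤ j) (h2 : j < d), (Cn j).card = k := by
    intro j h1 h2
    rw [Cval j h2, Finset.card_insert_of_notMem (vnotinN j h1 h2), hcard j h1 h2]
    omega
  have eraseC : ∀ j (h1 : k-1 ≤ j) (h2 : j < d), (Cn j).erase (σ ⟨j, h2⟩) = N j := by
    intro j h1 h2
    rw [Cval j h2, Finset.erase_insert (vnotinN j h1 h2)]
  have NsubC : ∀ j (h1 : k-1 ≤ j) (h2 : j < d), N j ⊆ Cn j := by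
    intro j h1 h2; rw [Cval j h2]; exact Finset.subset_insert _ _
  have cliqueC : ∀ j (h1 : k-1 ≤ j) (h2 : j < d), G.IsClique ↑(Cn j) := by
    intro j h1 h2 a ha b hb hab
    simp only [Finset.mem_coe] at ha hb
    rcases (memC j h1 h2 a).mp ha with rfl | ha' <;>
      rcases (memC j h1 h2 b).mp hb with rfl | hb'
    · exact absurd rfl hab
    · exact (hadj j h1 h2 b (hidx j h1 h2 b hb')).mpr hb'
    · exact ((hadj j h1 h2 a (hidx j h1 h2 a ha')).mpr ha').symm
    · exact hclq j h1 h2 a ha' b hb' hab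
  -- key containment lemma
  have F3 : ∀ (t : ℕ), t ≤ d → ∀ S : Finset (Fin d), G.IsClique ↑S →
      (∀ a ∈ S, (σ.symm a).val < t) →
      S ⊆ B ∨ ∃ i, k-1 ≤ i ∧ i < t ∧ S ⊆ Cn i := by
    intro t ht S hS hbound
    by_cases hall : ∀ a ∈ S, (σ.symm a).val < k-1
    · left; intro a ha; exact (memB a).mpr (hall a ha)
    · right
      push_neg at hall
      obtain ⟨a₁, ha₁S, ha₁⟩ := hall
      obtain ⟨a₀, ha₀S, hmax⟩ := S.exists_max_image (fun a => (σ.symm a).val) ⟨a₁, ha₁S⟩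
      have hi1 : k-1 ≤ (σ.symm a₀).val := le_trans ha₁ (hmax a₁ ha₁S)
      have hi2 : (σ.symm a₀).val < t := hbound a₀ ha₀S
      have hi2d : (σ.symm a₀).val < d := lt_of_lt_of_le hi2 ht
      have ha₀eq : σ ⟨(σ.symm a₀).val, hi2d⟩ = a₀ := by
        have : (⟨(σ.symm a₀).val, hi2d⟩ : Fin d) = σ.symm a₀ := by
          apply Fin.ext; rfl
        rw [this]; simp
      refine ⟨(σ.symm a₀).val, hi1, hi2, ?_⟩
      intro b hb
      rw [memC _ hi1 hi2d]
      by_cases hba : b = a₀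
      · left; rw [hba, ha₀eq]
      · right
        have hadjb : G.Adj a₀ b := hS ha₀S hb (fun h => hba h.symm)
        have hlt : (σ.symm b).val < (σ.symm a₀).val := by
          have hle := hmax b hb
          rcases lt_or_eq_of_le hle with h | h
          · exact h
          · exfalso; apply hba
            have : σ.symm b = σ.symm a₀ := Fin.ext h
            have := congrArg σ this; simpa using this
        have := hadj _ hi1 hi2d b hlt
        rw [← this, ha₀eq]
        exact hadjb
  -- maximality of extension cliques
  have maxC : ∀ j (h1 : k-1 ≤ j) (h2 : j < d), MaxClique G (Cn j) := by
    intro j h1 h2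
    refine ⟨cliqueC j h1 h2, ?_⟩
    intro t ht hsub
    rcases F3 d le_rfl t ht (fun a _ => (σ.symm a).isLt) with hB | ⟨i, hi1, hi2, hCi⟩
    · exfalso
      have := Finset.card_le_card (hsub.trans hB)
      rw [cardC j h1 h2, cardB] at this
      omega
    · have h1' : k ≤ t.card := by
        have := Finset.card_le_card hsub; rwa [cardC j h1 h2] at this
      have h2' : t.card ≤ k := by
        have := Finset.card_le_card hCi; rwa [cardC i hi1 hi2] at this
      exact Finset.eq_of_subset_of_card_le hsub (by rw [cardC j h1 h2]; omega)
  -- maximality of base clique when it equals no N i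
  have maxB : (∀ i, k-1 ≤ i → i < d → B ≠ N i) → MaxClique G B := by
    intro hcond
    refine ⟨cliqueB, ?_⟩
    intro t ht hsub
    rcases F3 d le_rfl t ht (fun a _ => (σ.symm a).isLt) with hB | ⟨i, hi1, hi2, hCi⟩
    · exact Finset.Subset.antisymm hsub hB
    · exfalso
      have hBC : B ⊆ Cn i := hsub.trans hCi
      have hvB : σ ⟨i, hi2⟩ ∉ B := by
        rw [memB]; simp; omega
      have hBN : B ⊆ N i := by
        rw [← eraseC i hi1 hi2]
        exact Finset.subset_erase.mpr ⟨hBC, hvB⟩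
      have : B = N i := Finset.eq_of_subset_of_card_le hBN (by rw [hcard i hi1 hi2, cardB])
      exact hcond i hi1 hi2 this
  -- characterization of maximal cliques
  have charMax : ∀ S : Finset (Fin d), MaxClique G S ↔
      ((∃ i, k-1 ≤ i ∧ i < d ∧ S = Cn i) ∨
        (S = B ∧ ∀ i, k-1 ≤ i → i < d → B ≠ N i)) := by
    intro S
    constructor
    · rintro ⟨hSclq, hSmax⟩
      rcases F3 d le_rfl S hSclq (fun a _ => (σ.symm a).isLt) with hB | ⟨i, hi1, hi2, hCi⟩
      · right
        have hSB : S = B := hSmax B cliqueB hB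
        refine ⟨hSB, ?_⟩
        intro i hi1 hi2 hBN
        have : S ⊆ Cn i := by rw [hSB, hBN]; exact NsubC i hi1 hi2
        have hSC : S = Cn i := hSmax (Cn i) (cliqueC i hi1 hi2) this
        have : B.card = (Cn i).card := by rw [← hSB, ← hSC]
        rw [cardB, cardC i hi1 hi2] at this
        omega
      · left
        exact ⟨i, hi1, hi2, hSmax (Cn i) (cliqueC i hi1 hi2) hCi⟩
    · rintro (⟨i, hi1, hi2, rfl⟩ | ⟨rfl, hcond⟩)
      · exact maxC i hi1 hi2
      · exact maxB hcond
  -- the family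
  set Hfam : ℕ → Finset (Finset (Fin d)) := fun t =>
    ((Finset.Ico (k-1) t).image Cn) ∪
      (if ∀ i ∈ Finset.Ico (k-1) t, B ≠ N i then {B} else ∅) with hHfamdef
  have memIf : ∀ t (S : Finset (Fin d)),
      S ∈ (if ∀ i ∈ Finset.Ico (k-1) t, B ≠ N i then ({B} : Finset (Finset (Fin d))) else ∅) ↔
        (S = B ∧ ∀ i, k-1 ≤ i → i < t → B ≠ N i) := by
    intro t S
    split_ifs with h
    · simp only [Finset.mem_singleton]
      exact ⟨fun hS => ⟨hS, fun i h1 h2 => h i (Finset.mem_Ico.mpr ⟨h1, h2⟩)⟩, fun h' => h'.1⟩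
    · simp only [Finset.notMem_empty, false_iff, not_and]
      intro _ hcond
      exact h (fun i hi => hcond i (Finset.mem_Ico.mp hi).1 (Finset.mem_Ico.mp hi).2)
  have memHfam : ∀ t (S : Finset (Fin d)), S ∈ Hfam t ↔
      ((∃ i, k-1 ≤ i ∧ i < t ∧ Cn i = S) ∨
        (S = B ∧ ∀ i, k-1 ≤ i → i < t → B ≠ N i)) := by
    intro t S
    simp only [hHfamdef, Finset.mem_union, Finset.mem_image]
    rw [memIf t S]
    constructor
    · rintro (⟨i, hi, hEq⟩ | hB)
      · rw [Finset.mem_Ico] at hi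
        exact Or.inl ⟨i, hi.1, hi.2, hEq⟩
      · exact Or.inr hB
    · rintro (⟨i, hi1, hi2, hEq⟩ | hB)
      · exact Or.inl ⟨i, Finset.mem_Ico.mpr ⟨hi1, hi2⟩, hEq⟩
      · exact Or.inr hB
  -- final identification
  have Hfam_final : Hfam d = Finset.univ.powerset.filter (fun s => MaxClique G s) := by
    ext S
    rw [memHfam, Finset.mem_filter, Finset.mem_powerset]
    constructor
    · intro h
      refine ⟨Finset.subset_univ S, (charMax S).mpr ?_⟩
      rcases h with ⟨i, h1, h2, h3⟩ | h
      · exact Or.inl ⟨i, h1, h2, h3.symm⟩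
      · exact Or.inr h
    · rintro ⟨-, h⟩
      rcases (charMax S).mp h with ⟨i, h1, h2, h3⟩ | h
      · exact Or.inl ⟨i, h1, h2, h3.symm⟩
      · exact Or.inr h
  -- base case
  have Hfam_base : Hfam (k-1) = {B} := by
    simp only [hHfamdef]
    simp
  -- step
  have step : ∀ t, k-1 ≤ t → t < d → GrahamReducible (Hfam t) →
      GrahamReducible (Hfam (t+1)) := by
    intro t ht1 ht2 IH
    set vt : Fin d := σ ⟨t, ht2⟩ with hvt
    have hidxvt : (σ.symm vt).val = t := by rw [hvt]; simp
    have hvtB : vt ∉ B := by rw [memB, hidxvt]; omega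
    have hvtCi : ∀ i, k-1 ≤ i → i < t → vt ∉ Cn i := by
      intro i hi1 hi2 hmem
      have h2d : i < d := by omega
      have := idxC i hi1 h2d vt hmem
      omega
    have hCt : Cn t ∈ Hfam (t+1) := (memHfam _ _).mpr (Or.inl ⟨t, ht1, by omega, rfl⟩)
    have huniq : ∀ E' ∈ Hfam (t+1), vt ∈ E' → E' = Cn t := by
      intro E' hE' hvE'
      rcases (memHfam _ _).mp hE' with ⟨i, hi1, hi2, rfl⟩ | ⟨rfl, -⟩
      · rcases Nat.lt_or_ge i t with h | h
        · exact absurd hvE' (hvtCi i hi1 h)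
        · have : i = t := by omega
          rw [this]
      · exact absurd hvE' hvtB
    refine GrahamReducible.nodeRemoval _ (Cn t) hCt vt (vinC t ht1 ht2) huniq ?_
    rw [eraseC t ht1 ht2]
    -- compute the erase
    have hCtne : ∀ i, k-1 ≤ i → i < t → Cn i ≠ Cn t := by
      intro i hi1 hi2 hEq
      exact hvtCi i hi1 hi2 (hEq ▸ vinC t ht1 ht2)
    have hCtneB : B ≠ Cn t := by
      intro hEq
      exact hvtB (hEq ▸ vinC t ht1 ht2)
    have herase : (Hfam (t+1)).erase (Cn t) =
        ((Finset.Ico (k-1) t).image Cn) ∪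
          (if ∀ i ∈ Finset.Ico (k-1) (t+1), B ≠ N i then {B} else ∅) := by
      ext S
      rw [Finset.mem_erase, memHfam]
      simp only [Finset.mem_union, Finset.mem_image]
      rw [memIf (t+1) S]
      constructor
      · rintro ⟨hSne, ⟨i, hi1, hi2, hEq⟩ | hB⟩
        · rcases Nat.lt_or_ge i t with h | h
          · exact Or.inl ⟨i, Finset.mem_Ico.mpr ⟨hi1, h⟩, hEq⟩
          · exfalso; apply hSne; rw [← hEq]; congr 1; omega
        · exact Or.inr ⟨hB.1, fun i h1 h2 => hB.2 i h1 (by omega)⟩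
      · rintro (⟨i, hi, hEq⟩ | hB)
        · rw [Finset.mem_Ico] at hi
          exact ⟨hEq ▸ hCtne i hi.1 hi.2, Or.inl ⟨i, hi.1, by omega, hEq⟩⟩
        · exact ⟨fun h => hCtneB (hB.1 ▸ h), Or.inr ⟨hB.1, fun i h1 h2 => hB.2 i h1 (by omega)⟩⟩
    rw [herase]
    by_cases hcaseA : (∀ i ∈ Finset.Ico (k-1) t, B ≠ N i) ∧ B = N t
    · -- case A: the new set is exactly Hfam t
      obtain ⟨hcond, hBNt⟩ := hcaseA
      have hcond1 : ¬ (∀ i ∈ Finset.Ico (k-1) (t+1), B ≠ N i) := by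
        push_neg
        exact ⟨t, Finset.mem_Ico.mpr ⟨ht1, by omega⟩, hBNt⟩
      rw [if_neg hcond1, Finset.union_empty, ← hBNt]
      have : insert B ((Finset.Ico (k-1) t).image Cn) = Hfam t := by
        simp only [hHfamdef]
        rw [if_pos hcond, Finset.union_comm]
        exact (Finset.insert_eq B _).symm ▸ rfl
      rw [this]
      exact IH
    · -- case B
      have hifEq : (if ∀ i ∈ Finset.Ico (k-1) (t+1), B ≠ N i then ({B} : Finset (Finset (Fin d))) else ∅) =
          (if ∀ i ∈ Finset.Ico (k-1) t, B ≠ N i then {B} else ∅) := by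
        by_cases hcond : ∀ i ∈ Finset.Ico (k-1) t, B ≠ N i
        · have hBNt : B ≠ N t := fun h => hcaseA ⟨hcond, h⟩
          rw [if_pos hcond, if_pos]
          intro i hi
          rw [Finset.mem_Ico] at hi
          rcases Nat.lt_or_ge i t with h | h
          · exact hcond i (Finset.mem_Ico.mpr ⟨hi.1, h⟩)
          · have : i = t := by omega
            rw [this]; exact hBNt
        · rw [if_neg hcond, if_neg]
          intro hcond'
          exact hcond (fun i hi => hcond' i (by rw [Finset.mem_Ico] at hi ⊢; omega))
      rw [hifEq]
      have hXH : ((Finset.Ico (k-1) t).image Cn) ∪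
          (if ∀ i ∈ Finset.Ico (k-1) t, B ≠ N i then {B} else ∅) = Hfam t := by
        simp only [hHfamdef]
      rw [hXH]
      -- find a strict superset of N t in Hfam t
      have hNtclq : G.IsClique ↑(N t) := by
        intro a ha b hb hab
        simp only [Finset.mem_coe] at ha hb
        exact hclq t ht1 ht2 a ha b hb hab
      have hNtbound : ∀ a ∈ N t, (σ.symm a).val < t := hidx t ht1 ht2
      obtain ⟨i, hi1, hi2, hsub⟩ : ∃ i, k-1 ≤ i ∧ i < t ∧ N t ⊆ Cn i := by
        rcases F3 t (le_of_lt ht2) (N t) hNtclq hNtbound with hB | ⟨i, hi1, hi2, hsub⟩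
        · -- N t ⊆ B, so N t = B, so not cond t, so B = N i₀ for some i₀ < t
          have hNtB : N t = B :=
            Finset.eq_of_subset_of_card_le hB (by rw [cardB, hcard t ht1 ht2])
          have hncond : ¬ (∀ i ∈ Finset.Ico (k-1) t, B ≠ N i) := by
            intro hcond
            exact hcaseA ⟨hcond, hNtB.symm⟩
          push_neg at hncond
          obtain ⟨i₀, hi₀, hBN⟩ := hncond
          rw [Finset.mem_Ico] at hi₀
          refine ⟨i₀, hi₀.1, hi₀.2, ?_⟩
          rw [hNtB, hBN]
          exact NsubC i₀ hi₀.1 (by omega)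
        · exact ⟨i, hi1, hi2, hsub⟩
      have hi2d : i < d := by omega
      have hNtne : N t ≠ Cn i := by
        intro h
        have : (N t).card = (Cn i).card := by rw [h]
        rw [hcard t ht1 ht2, cardC i hi1 hi2d] at this
        omega
      have hCiH : Cn i ∈ Hfam t := (memHfam _ _).mpr (Or.inl ⟨i, hi1, hi2, rfl⟩)
      have hNtnotin : N t ∉ Hfam t := by
        intro hmem
        rcases (memHfam _ _).mp hmem with ⟨i', hi'1, hi'2, hEq⟩ | ⟨hEq, hcond⟩
        · have : (Cn i').card = (N t).card := by rw [hEq]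
          rw [hcard t ht1 ht2, cardC i' hi'1 (by omega)] at this
          omega
        · -- N t = B and cond t holds; but N t ⊆ Cn i forces B = N i, contradiction
          have hvB : σ ⟨i, hi2d⟩ ∉ B := by rw [memB]; simp; omega
          have hBN : B ⊆ N i := by
            rw [← eraseC i hi1 hi2d]
            exact Finset.subset_erase.mpr ⟨hEq ▸ hsub, hvB⟩
          have : B = N i :=
            Finset.eq_of_subset_of_card_le hBN (by rw [hcard i hi1 hi2d, cardB])
          exact hcond i hi1 hi2 this
      refine GrahamReducible.edgeRemoval _ (N t) (Cn i) (Finset.mem_insert_self _ _)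
        (Finset.mem_insert_of_mem hCiH) hNtne hsub ?_
      rw [Finset.erase_insert hNtnotin]
      exact IH
  -- assemble
  have main : ∀ n, k-1+n ≤ d → GrahamReducible (Hfam (k-1+n)) := by
    intro n
    induction n with
    | zero =>
      intro _
      rw [Nat.add_zero, Hfam_base]
      exact graham_single B
    | succ n ih =>
      intro h
      have h1 := step (k-1+n) (by omega) (by omega) (ih (by omega))
      rwa [show k-1+(n+1) = (k-1+n)+1 from rfl]
  rw [← Hfam_final]
  have := main (d - (k-1)) (by omega)
  rwa [show k-1+(d-(k-1)) = d by omega] at this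


/-- Graham reduction succeeds on the hypergraph formed by the maximal cliques
of a `k`-th order t-cherry tree: it reduces to nothing. -/
theorem graham_reduction_of_tCherry (k d : ℕ) (hk : 1 ≤ k) (hd : k - 1 ≤ d)
    (G : SimpleGraph (Fin d)) (hG : IsTCherry k d G) :
    GrahamReducible (Finset.univ.powerset.filter (fun s => MaxClique G s)) := by
  classical
  obtain ⟨σ, hbase, hext⟩ := hG
  choose N' h1 h2 h3 h4 h5 using hext
  set N : ℕ → Finset (Fin d) := fun j =>
    if h : j < d ∧ k - 1 ≤ j then N' ⟨j, h.1⟩ h.2 else ∅ with hNdef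
  have hNval : ∀ j (h2 : j < d) (h1 : k - 1 ≤ j), N j = N' ⟨j, h2⟩ h1 := by
    intro j hj2 hj1
    simp only [hNdef, dif_pos (And.intro hj2 hj1)]
  refine master k d hk hd G σ ?_ N ?_ ?_ ?_ ?_ ?_
  · -- base
    intro a b ha hb hab
    have := hbase (σ.symm a) (σ.symm b) ha hb (fun h => hab (by simpa using congrArg σ h))
    simpa using this
  · -- card
    intro j hj1 hj2
    rw [hNval j hj2 hj1]
    exact h1 ⟨j, hj2⟩ hj1
  · -- idx
    intro j hj1 hj2 a ha
    rw [hNval j hj2 hj1] at ha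
    obtain ⟨i, hi, rfl⟩ := h2 ⟨j, hj2⟩ hj1 a ha
    simpa using hi
  · -- clique
    intro j hj1 hj2 a ha b hb hab
    rw [hNval j hj2 hj1] at ha hb
    exact h3 ⟨j, hj2⟩ hj1 a ha b hb hab
  · -- adjacency iff
    intro j hj1 hj2 a ha
    rw [hNval j hj2 hj1]
    have := h4 ⟨j, hj2⟩ hj1 (σ.symm a) ha
    simpa using this
  · -- neighbours
    intro j hj1 hj2 a hadj
    rw [hNval j hj2 hj1]
    rcases h5 ⟨j, hj2⟩ hj1 a hadj with h | ⟨i, hi, rfl⟩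
    · exact Or.inl h
    · right; simpa using hi

end TCherryPaper
end
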